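/- For a function q : (ZMod 2)^3 → ℝ define its four face marginals, each a function (ZMod 2)^2 → ℝ: (d₀q)(a₂,a₃) = ∑_a q(a,a₂,a₃), (d₁q)(b,a₃) = ∑_{a₁+a₂=b} q(a₁,a₂,a₃), (d₂q)(a₁,b) = ∑_{a₂+a₃=b} q(a₁,a₂,a₃), (d₃q)(a₁,a₂) = ∑_a q(a₁,a₂,a); likewise for p : (ZMod 2)^2 → ℝ define (d₀p)(a) = ∑_b p(b,a), (d₁p)(a) = ∑_{b+c=a} p(b,c), (d₂p)(a) = ∑_b p(a,b). Let p₀, p₁, p₂, p₃ be distributions on (ZMod 2)^2 satisfying the simplicial compatibility conditions d_i p_j = d_{j−1} p_i for all 0 ≤ i < j ≤ 3. Then there exists a distribution q on (ZMod 2)^3 (nonnegative with total sum 1) with d_i q = p_i for i = 0,1,2,3. Consequently, every simplicial probability distribution on the boundary of the 3-simplex with outcome space the nerve of Z₂ extends to the 3-simplex, and hence is noncontextual. -/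

import Mathlib

/-!
Put `x := q 0`, the slice of `q` at first coordinate `0`. The condition `d₀ q = p₀` forces
`q 1 = p₀ - x`, and then `d₁ q = p₁`, `d₂ q = p₂`, `d₃ q = p₃` become linear conditions on `x`
alone, the `q 1` halves being taken care of by the compatibility of `p₀` with `p₁, p₂, p₃`.
Thanks to the remaining compatibility conditions, these are solved by the one-parameter family
`x 0 0 = t`, `x 0 1 = s - t`, `x 1 0 = t - A`, `x 1 1 = s - t - B`, where `s = p₃ 0 0`,
`A = p₁ 0 0 - p₀ 1 0` and `B = p₁ 0 1 - p₀ 1 1`. Now `0 ≤ q` says that `t` lies above four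
lower bounds and below four upper bounds, and modulo the compatibility equations each of the
sixteen inequalities "lower bound ≤ upper bound" is the nonnegativity of one of the sixteen
entries of `p₀, p₁, p₂, p₃`.
-/

open Finset

/-- A distribution on `(ZMod 2)²`: nonnegative with total mass 1. -/
def IsDist2 (p : ZMod 2 → ZMod 2 → ℝ) : Prop :=
  (∀ a b, 0 ≤ p a b) ∧ (∑ a : ZMod 2, ∑ b : ZMod 2, p a b = 1)

/-- A distribution on `(ZMod 2)³`: nonnegative with total mass 1. -/
def IsDist3 (q : ZMod 2 → ZMod 2 → ZMod 2 → ℝ) : Prop :=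
  (∀ a b c, 0 ≤ q a b c) ∧
  (∑ a : ZMod 2, ∑ b : ZMod 2, ∑ c : ZMod 2, q a b c = 1)

/-- Face marginals of a distribution on `(ZMod 2)²` (faces of a triangle). -/
def face2 (i : Fin 3) (p : ZMod 2 → ZMod 2 → ℝ) : ZMod 2 → ℝ :=
  match i with
  | 0 => fun a => ∑ b : ZMod 2, p b a
  | 1 => fun a => ∑ x ∈ univ.filter (fun x : ZMod 2 × ZMod 2 => x.1 + x.2 = a), p x.1 x.2
  | 2 => fun a => ∑ b : ZMod 2, p a b

/-- Face marginals of a distribution on `(ZMod 2)³` (faces of a tetrahedron). -/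
def face3 (i : Fin 4) (q : ZMod 2 → ZMod 2 → ZMod 2 → ℝ) : ZMod 2 → ZMod 2 → ℝ :=
  match i with
  | 0 => fun a₂ a₃ => ∑ a : ZMod 2, q a a₂ a₃
  | 1 => fun b a₃ =>
      ∑ x ∈ univ.filter (fun x : ZMod 2 × ZMod 2 => x.1 + x.2 = b), q x.1 x.2 a₃
  | 2 => fun a₁ b =>
      ∑ x ∈ univ.filter (fun x : ZMod 2 × ZMod 2 => x.1 + x.2 = b), q a₁ x.1 x.2
  | 3 => fun a₁ a₂ => ∑ a : ZMod 2, q a₁ a₂ a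

theorem Finset.sum_filter_add_eq {G M : Type*} [AddCommGroup G] [Fintype G] [DecidableEq G]
    [AddCommMonoid M] (f : G → G → M) (a : G) :
    ∑ x ∈ univ.filter (fun x : G × G => x.1 + x.2 = a), f x.1 x.2 = ∑ b, f b (a - b) := by
  simp only [sum_filter, Fintype.sum_prod_type, ← eq_sub_iff_add_eq', sum_ite_eq', mem_univ, if_true]

theorem Finset.exists_forall_le_forall_ge {α : Type*} [LinearOrder α] {L U : Finset α}
    (hL : L.Nonempty) (h : ∀ l ∈ L, ∀ u ∈ U, l ≤ u) :
    ∃ t, (∀ l ∈ L, l ≤ t) ∧ ∀ u ∈ U, t ≤ u :=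
  ⟨L.max' hL, fun l hl => L.le_max' l hl, fun u hu => L.max'_le hL _ fun l hl => h l hl u hu⟩

namespace ZMod

theorem forall_two {P : ZMod 2 → Prop} : (∀ a, P a) ↔ P 0 ∧ P 1 := Fin.forall_fin_two

theorem eq_zero_or_one : ∀ a : ZMod 2, a = 0 ∨ a = 1 := by decide

theorem sum_univ_two {M : Type*} [AddCommMonoid M] (f : ZMod 2 → M) :
    ∑ a, f a = f 0 + f 1 :=
  Fin.sum_univ_two f

theorem sum_filter_add_eq {M : Type*} [AddCommMonoid M] (f : ZMod 2 → ZMod 2 → M) (a : ZMod 2) :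
    ∑ x ∈ univ.filter (fun x : ZMod 2 × ZMod 2 => x.1 + x.2 = a), f x.1 x.2
      = f 0 a + f 1 (a + 1) := by
  rw [Finset.sum_filter_add_eq, sum_univ_two, sub_zero, sub_eq_add_neg, neg_eq_self_mod_two]

end ZMod

section FaceApply

variable (p : ZMod 2 → ZMod 2 → ℝ) (q : ZMod 2 → ZMod 2 → ZMod 2 → ℝ) (a b : ZMod 2)

theorem face2_zero_apply : face2 0 p a = p 0 a + p 1 a := ZMod.sum_univ_two _

theorem face2_one_apply : face2 1 p a = p 0 a + p 1 (a + 1) := ZMod.sum_filter_add_eq p a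

theorem face2_two_apply : face2 2 p a = p a 0 + p a 1 := ZMod.sum_univ_two _

theorem face3_zero_apply : face3 0 q a b = q 0 a b + q 1 a b := ZMod.sum_univ_two _

theorem face3_one_apply : face3 1 q a b = q 0 a b + q 1 (a + 1) b :=
  ZMod.sum_filter_add_eq (fun u v => q u v b) a

theorem face3_two_apply : face3 2 q a b = q a 0 b + q a 1 (b + 1) :=
  ZMod.sum_filter_add_eq (q a) b

theorem face3_three_apply : face3 3 q a b = q a b 0 + q a b 1 := ZMod.sum_univ_two _

end FaceApply

def splitFirst (p x : ZMod 2 → ZMod 2 → ℝ) : ZMod 2 → ZMod 2 → ZMod 2 → ℝ :=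
  fun a b c => if a = 0 then x b c else p b c - x b c

section SplitFirst

variable {p x : ZMod 2 → ZMod 2 → ℝ}

@[simp]
theorem splitFirst_zero (b c : ZMod 2) : splitFirst p x 0 b c = x b c := rfl

@[simp]
theorem splitFirst_one (b c : ZMod 2) : splitFirst p x 1 b c = p b c - x b c := rfl

theorem face3_zero_splitFirst : face3 0 (splitFirst p x) = p := by
  funext b c
  simp [face3_zero_apply]

theorem isDist3_splitFirst (hp : IsDist2 p) (hx₀ : 0 ≤ x) (hxp : x ≤ p) :
    IsDist3 (splitFirst p x) := by
  refine ⟨fun a b c => ?_, ?_⟩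
  · obtain rfl | rfl := ZMod.eq_zero_or_one a
    · exact hx₀ b c
    · exact sub_nonneg.2 (hxp b c)
  · have hp₁ := hp.2
    simp only [ZMod.sum_univ_two, splitFirst_zero, splitFirst_one] at hp₁ ⊢
    linarith

theorem face3_one_splitFirst {p₁ : ZMod 2 → ZMod 2 → ℝ} (hc : face2 0 p₁ = face2 0 p)
    (hx : ∀ c, x 0 c - x 1 c = p₁ 0 c - p 1 c) : face3 1 (splitFirst p x) = p₁ := by
  funext b c
  have hc' := congrFun hc c
  rw [face2_zero_apply, face2_zero_apply] at hc'
  obtain rfl | rfl := ZMod.eq_zero_or_one b <;>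
  simp only [face3_one_apply, zero_add, CharTwo.add_self_eq_zero, splitFirst_zero,
    splitFirst_one] <;>
  linarith [hx c]

theorem face3_two_splitFirst {p₂ : ZMod 2 → ZMod 2 → ℝ} (hc : face2 0 p₂ = face2 1 p)
    (hx : ∀ b, x 0 b + x 1 (b + 1) = p₂ 0 b) : face3 2 (splitFirst p x) = p₂ := by
  funext a b
  have hc' := congrFun hc b
  rw [face2_zero_apply, face2_one_apply] at hc'
  obtain rfl | rfl := ZMod.eq_zero_or_one a
  · simpa [face3_two_apply] using hx b
  · simp only [face3_two_apply, splitFirst_one]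
    linarith [hx b]

theorem face3_three_splitFirst {p₃ : ZMod 2 → ZMod 2 → ℝ} (hc : face2 0 p₃ = face2 2 p)
    (hx : ∀ b, x b 0 + x b 1 = p₃ 0 b) : face3 3 (splitFirst p x) = p₃ := by
  funext a b
  have hc' := congrFun hc b
  rw [face2_zero_apply, face2_two_apply] at hc'
  obtain rfl | rfl := ZMod.eq_zero_or_one a
  · simpa [face3_three_apply] using hx b
  · simp only [face3_three_apply, splitFirst_one]
    linarith [hx b]

end SplitFirst

theorem exists_slice_of_compatible {p₀ p₁ p₂ p₃ : ZMod 2 → ZMod 2 → ℝ}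
    (h₀ : 0 ≤ p₀) (h₁ : 0 ≤ p₁) (h₂ : 0 ≤ p₂) (h₃ : 0 ≤ p₃)
    (c01 : face2 0 p₁ = face2 0 p₀) (c02 : face2 0 p₂ = face2 1 p₀)
    (c03 : face2 0 p₃ = face2 2 p₀) (c12 : face2 1 p₂ = face2 1 p₁)
    (c13 : face2 1 p₃ = face2 2 p₁) (c23 : face2 2 p₃ = face2 2 p₂) :
    ∃ x : ZMod 2 → ZMod 2 → ℝ, 0 ≤ x ∧ x ≤ p₀ ∧
      (∀ c, x 0 c - x 1 c = p₁ 0 c - p₀ 1 c) ∧ (∀ b, x 0 b + x 1 (b + 1) = p₂ 0 b) ∧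
      ∀ b, x b 0 + x b 1 = p₃ 0 b := by
  simp only [Pi.le_def, Pi.zero_apply, ZMod.forall_two] at h₀ h₁ h₂ h₃
  simp only [funext_iff, ZMod.forall_two, face2_zero_apply, face2_one_apply, face2_two_apply,
    zero_add, CharTwo.add_self_eq_zero] at c01 c02 c03 c12 c13 c23
  casesm* _ ∧ _
  obtain ⟨t, hlo, hhi⟩ := exists_forall_le_forall_ge
    (L := {0, p₁ 0 0 - p₀ 1 0, p₃ 0 0 - p₀ 0 1, p₃ 0 0 - p₁ 0 1})
    (U := {p₃ 0 0, p₃ 0 0 - p₁ 0 1 + p₀ 1 1, p₀ 0 0, p₁ 0 0}) (insert_nonempty _ _) (by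
      simp only [mem_insert, mem_singleton, forall_eq_or_imp, forall_eq]
      refine ⟨⟨?_, ?_, ?_, ?_⟩, ⟨?_, ?_, ?_, ?_⟩, ⟨?_, ?_, ?_, ?_⟩, ?_, ?_, ?_, ?_⟩ <;> linarith)
  simp only [mem_insert, mem_singleton, forall_eq_or_imp, forall_eq] at hlo hhi
  refine ⟨fun b c => if b = 0 then (if c = 0 then t else p₃ 0 0 - t)
      else if c = 0 then t - (p₁ 0 0 - p₀ 1 0) else p₃ 0 0 - t - (p₁ 0 1 - p₀ 1 1),
    ?_, ?_, ?_, ?_, ?_⟩ <;>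
  simp only [Pi.le_def, Pi.zero_apply, ZMod.forall_two, one_ne_zero, zero_add,
    CharTwo.add_self_eq_zero, ↓reduceIte] <;>
  constructorm* _ ∧ _ <;> linarith

theorem boundary_delta3_extends (p₀ p₁ p₂ p₃ : ZMod 2 → ZMod 2 → ℝ)
    (h₀ : IsDist2 p₀) (h₁ : IsDist2 p₁) (h₂ : IsDist2 p₂) (h₃ : IsDist2 p₃)
    (c01 : face2 0 p₁ = face2 0 p₀)
    (c02 : face2 0 p₂ = face2 1 p₀)
    (c03 : face2 0 p₃ = face2 2 p₀)
    (c12 : face2 1 p₂ = face2 1 p₁)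
    (c13 : face2 1 p₃ = face2 2 p₁)
    (c23 : face2 2 p₃ = face2 2 p₂) :
    ∃ q : ZMod 2 → ZMod 2 → ZMod 2 → ℝ, IsDist3 q ∧
      face3 0 q = p₀ ∧ face3 1 q = p₁ ∧ face3 2 q = p₂ ∧ face3 3 q = p₃ := by
  obtain ⟨x, hx₀, hxp, hcol, hdiag, hrow⟩ :=
    exists_slice_of_compatible h₀.1 h₁.1 h₂.1 h₃.1 c01 c02 c03 c12 c13 c23
  exact ⟨splitFirst p₀ x, isDist3_splitFirst h₀ hx₀ hxp, face3_zero_splitFirst,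
    face3_one_splitFirst c01 hcol, face3_two_splitFirst c02 hdiag, face3_three_splitFirst c03 hrow⟩
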